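/- arXiv:1411.4592 — 2 statements merged into one kernel-verified Lean document; each statement's English description precedes it below -/
import Mathlib

section
/- Let n ≥ 2, let T be an invertible n×n real Toeplitz matrix, and let u = (u₁,…,u_{n+1}) ∈ ℝ^{n+1} with u₁ ≠ 0 and u_{n+1} ≠ 0, such that u lies in the kernel of ∂T. Then there exists a function a : ℤ → ℝ such that T_{p,q} = a(p−q) for all 1 ≤ p,q ≤ n, and for all integers i, j and all 1 ≤ p,q ≤ n, (C_t(u)^i · T · C_r(u)^j)_{p,q} = a(p − q − i − j). In particular, every matrix C_t(u)^i · T · C_r(u)^j (i, j ∈ ℤ) is Toeplitz, so the extension of T by companion matrices preserves the Toeplitz structure. -/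
open Matrix Polynomial

noncomputable section

/-- Top companion matrix of `u`. -/
def Ct (n : ℕ) (u : Fin (n + 1) → ℝ) : Matrix (Fin n) (Fin n) ℝ :=
  Matrix.of fun i j =>
    if i.val = 0 then -u ⟨n - 1 - j.val, by omega⟩ / u (Fin.last n)
    else if j.val + 1 = i.val then 1 else 0

/-- Bottom companion matrix of `u`. -/
def Cb (n : ℕ) (u : Fin (n + 1) → ℝ) : Matrix (Fin n) (Fin n) ℝ :=
  Matrix.of fun i j =>
    if i.val = n - 1 then -u ⟨n - j.val, by omega⟩ / u 0
    else if j.val = i.val + 1 then 1 else 0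

/-- Left companion matrix of `u`. -/
def Cl (n : ℕ) (u : Fin (n + 1) → ℝ) : Matrix (Fin n) (Fin n) ℝ :=
  Matrix.of fun i j =>
    if j.val = 0 then -u ⟨i.val + 1, by have := i.isLt; omega⟩ / u 0
    else if i.val + 1 = j.val then 1 else 0

/-- Right companion matrix of `u`. -/
def Cr (n : ℕ) (u : Fin (n + 1) → ℝ) : Matrix (Fin n) (Fin n) ℝ :=
  Matrix.of fun i j =>
    if j.val = n - 1 then -u ⟨i.val, by have := i.isLt; omega⟩ / u (Fin.last n)
    else if i.val = j.val + 1 then 1 else 0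

/-- A square matrix is Toeplitz if entries depend only on the difference of indices. -/
def IsToeplitz {n : ℕ} (T : Matrix (Fin n) (Fin n) ℝ) : Prop :=
  ∀ (i j : Fin n) (hi : i.val + 1 < n) (hj : j.val + 1 < n),
    T ⟨i.val + 1, hi⟩ ⟨j.val + 1, hj⟩ = T i j

/-- A square matrix is Hankel if entries depend only on the sum of indices. -/
def IsHankel {n : ℕ} (H : Matrix (Fin n) (Fin n) ℝ) : Prop :=
  ∀ (i j : Fin n) (hi : i.val + 1 < n) (hj : j.val + 1 < n),
    H ⟨i.val + 1, hi⟩ j = H i ⟨j.val + 1, hj⟩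

/-- `∂T` for a Toeplitz matrix `T`: the (n-1)×(n+1) matrix with entries `a_{i+1-j}`
(1-based), expressed via the entries of `T`. -/
def dT {n : ℕ} (T : Matrix (Fin n) (Fin n) ℝ) : Matrix (Fin (n - 1)) (Fin (n + 1)) ℝ :=
  Matrix.of fun i j =>
    if j.val = 0 then
      T ⟨i.val + 1, by have := i.isLt; omega⟩ ⟨0, by have := i.isLt; omega⟩
    else
      T ⟨i.val, by have := i.isLt; omega⟩ ⟨j.val - 1, by have := i.isLt; have := j.isLt; omega⟩

/-- `∂H` for a Hankel matrix `H`: the (n-1)×(n+1) matrix with entries `a_{i+j-n-1}`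
(1-based), expressed via the entries of `H`. -/
def dH {n : ℕ} (H : Matrix (Fin n) (Fin n) ℝ) : Matrix (Fin (n - 1)) (Fin (n + 1)) ℝ :=
  Matrix.of fun i j =>
    if h : j.val < n then H ⟨i.val, by have := i.isLt; omega⟩ ⟨j.val, h⟩
    else H ⟨i.val + 1, by have := i.isLt; omega⟩ ⟨n - 1, by have := i.isLt; omega⟩

/-- The reversed vector `u^J`. -/
def revVec {m : ℕ} (u : Fin m → ℝ) : Fin m → ℝ := fun i => u i.rev

/-- The lower triangular Toeplitz matrix `U₊(u)` with first column `(u₁,…,u_n)ᵀ`. -/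
def Uplus (n : ℕ) (u : Fin (n + 1) → ℝ) : Matrix (Fin n) (Fin n) ℝ :=
  Matrix.of fun i j =>
    if j.val ≤ i.val then u ⟨i.val - j.val, by have := i.isLt; omega⟩ else 0

/-- The upper triangular Toeplitz matrix `U₋(u)` with first row `(u_{n+1},…,u₂)`. -/
def Uminus (n : ℕ) (u : Fin (n + 1) → ℝ) : Matrix (Fin n) (Fin n) ℝ :=
  Matrix.of fun i j =>
    if h : i.val ≤ j.val then u ⟨n + i.val - j.val, by have := j.isLt; omega⟩ else 0

/-- The flip (exchange) matrix `J`. -/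
def Jmat (n : ℕ) : Matrix (Fin n) (Fin n) ℝ :=
  Matrix.of fun i j => if j = i.rev then 1 else 0

/-- The Toeplitz Bezoutian `B_T(u,v) = U₊(u)U₋(v) − U₊(v)U₋(u)`. -/
def BT (n : ℕ) (u v : Fin (n + 1) → ℝ) : Matrix (Fin n) (Fin n) ℝ :=
  Uplus n u * Uminus n v - Uplus n v * Uminus n u

/-- The Hankel Bezoutian `B_H(u,v) = U₊(v)JU₋(u) − U₊(u)JU₋(v)`. -/
def BH (n : ℕ) (u v : Fin (n + 1) → ℝ) : Matrix (Fin n) (Fin n) ℝ :=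
  Uplus n v * Jmat n * Uminus n u - Uplus n u * Jmat n * Uminus n v

/-- The polynomial `u(λ) = u₁ + u₂λ + ⋯ + u_{n+1}λⁿ` associated to a vector. -/
def polyOf {m : ℕ} (u : Fin m → ℝ) : Polynomial ℝ :=
  ∑ i : Fin m, Polynomial.C (u i) * Polynomial.X ^ (i : ℕ)

/-! The kernel condition says that the symbol `a_{1-n}, …, a_{n-1}` of `T` obeys the linear
recurrence `∑ⱼ u_j a(k - j) = 0` wherever it fits; since `u₁` and `u_{n+1}` are nonzero the
recurrence continues `a` uniquely to all of `ℤ`. On Toeplitz matrices built from a solution of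
the recurrence, both `C_t(u)` (from the left) and `C_r(u)` (from the right) act by the shift
`a ↦ a(· - 1)`; as `T` is invertible, so are the companion matrices, and the shift relations
pass to all integer powers. -/

open Matrix

section

variable {ι R : Type*} [Fintype ι] [DecidableEq ι] [CommRing R] {A : Matrix ι ι R}
  {M : ℤ → Matrix ι ι R}

theorem Matrix.zpow_mul_eq_of_mul_eq (hA : IsUnit A.det) (h : ∀ c, A * M c = M (c + 1))
    (i c : ℤ) : A ^ i * M c = M (c + i) := by
  induction i using Int.induction_on generalizing c with
  | zero => rw [zpow_zero, one_mul, add_zero]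
  | succ i ih =>
    rw [zpow_add_one hA, mul_assoc, h, ih]
    congr 1
    ring
  | pred i ih =>
    have hinv (c : ℤ) : A⁻¹ * M c = M (c - 1) := by
      simpa only [h, sub_add_cancel] using
        nonsing_inv_mul_cancel_left (A := A) (M (c - 1)) hA
    rw [zpow_sub_one hA, mul_assoc, hinv, ih]
    congr 1
    ring

theorem Matrix.mul_zpow_eq_of_mul_eq (hA : IsUnit A.det) (h : ∀ c, M c * A = M (c + 1))
    (i c : ℤ) : M c * A ^ i = M (c + i) := by
  induction i using Int.induction_on generalizing c with
  | zero => rw [zpow_zero, mul_one, add_zero]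
  | succ i ih => rw [zpow_add_one hA, ← mul_assoc, ih, h, add_assoc]
  | pred i ih =>
    have hinv (c : ℤ) : M c * A⁻¹ = M (c - 1) := by
      simpa only [h, sub_add_cancel] using
        mul_nonsing_inv_cancel_right (A := A) (M (c - 1)) hA
    rw [zpow_sub_one hA, ← mul_assoc, ih, hinv]
    congr 1
    ring

end

section

variable {n : ℕ}

theorem IsToeplitz.apply_add {T : Matrix (Fin n) (Fin n) ℝ} (hT : IsToeplitz T) (p q k : ℕ)
    (hp : p + k < n) (hq : q + k < n) :
    T ⟨p + k, hp⟩ ⟨q + k, hq⟩ = T ⟨p, by omega⟩ ⟨q, by omega⟩ := by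
  induction k with
  | zero => rfl
  | succ k ih =>
    exact (hT ⟨p + k, by omega⟩ ⟨q + k, by omega⟩ hp hq).trans (ih (by omega) (by omega))

def toeplitz (a : ℤ → ℝ) : Matrix (Fin n) (Fin n) ℝ :=
  Matrix.of fun p q => a (p - q)

theorem isToeplitz_toeplitz (a : ℤ → ℝ) :
    IsToeplitz (toeplitz a : Matrix (Fin n) (Fin n) ℝ) := by
  intro p q hp hq
  simp only [toeplitz, of_apply]
  congr 1
  push_cast
  ring

variable {u : Fin (n + 1) → ℝ}

theorem Ct_mul_apply_zero (X : Matrix (Fin n) (Fin n) ℝ) (h : 0 < n) (q : Fin n) :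
    (Ct n u * X) ⟨0, h⟩ q = -(∑ s : Fin n, u s.castSucc * X s.rev q) / u (Fin.last n) := by
  rw [mul_apply, ← Equiv.sum_comp Fin.revPerm, neg_div, Finset.sum_div,
    ← Finset.sum_neg_distrib]
  refine Finset.sum_congr rfl fun s _ => ?_
  have hs : (⟨n - 1 - s.rev, by omega⟩ : Fin (n + 1)) = s.castSucc := by
    ext; simp only [Fin.val_castSucc, Fin.val_rev]; omega
  simp only [Ct, of_apply, Fin.revPerm_apply, if_pos, hs]
  ring

theorem Ct_mul_apply_succ (X : Matrix (Fin n) (Fin n) ℝ) (i : ℕ) (h : i + 1 < n) (q : Fin n) :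
    (Ct n u * X) ⟨i + 1, h⟩ q = X ⟨i, by omega⟩ q := by
  rw [mul_apply, Finset.sum_eq_single ⟨i, by omega⟩]
  · simp [Ct]
  · intro r _ hr
    rw [Ne, Fin.ext_iff] at hr
    rw [Ct, of_apply, if_neg (by simp), if_neg (by simpa using hr), zero_mul]
  · simp

theorem mul_Cr_apply_last (X : Matrix (Fin n) (Fin n) ℝ) (p : Fin n) (h : n - 1 < n) :
    (X * Cr n u) p ⟨n - 1, h⟩ = -(∑ s : Fin n, u s.castSucc * X p s) / u (Fin.last n) := by
  rw [mul_apply, neg_div, Finset.sum_div, ← Finset.sum_neg_distrib]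
  refine Finset.sum_congr rfl fun s _ => ?_
  simp only [Cr, of_apply, if_pos]
  rw [show (⟨s, by omega⟩ : Fin (n + 1)) = s.castSucc from rfl]
  ring

theorem mul_Cr_apply_of_succ_lt (X : Matrix (Fin n) (Fin n) ℝ) (p : Fin n) (j : ℕ)
    (h : j + 1 < n) : (X * Cr n u) p ⟨j, by omega⟩ = X p ⟨j + 1, h⟩ := by
  rw [mul_apply, Finset.sum_eq_single ⟨j + 1, h⟩]
  · rw [Cr, of_apply, if_neg (show j ≠ n - 1 by omega), if_pos rfl, mul_one]
  · intro r _ hr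
    rw [Ne, Fin.ext_iff] at hr
    rw [Cr, of_apply, if_neg (show j ≠ n - 1 by omega), if_neg hr, mul_zero]
  · simp

def SolvesRecurrence (u : Fin (n + 1) → ℝ) (a : ℤ → ℝ) : Prop :=
  ∀ k : ℤ, ∑ j : Fin (n + 1), u j * a (k - j) = 0

namespace SolvesRecurrence

variable {a : ℤ → ℝ}

theorem comp_sub (ha : SolvesRecurrence u a) (c : ℤ) : SolvesRecurrence u (fun m => a (m - c)) :=
  fun k => (Finset.sum_congr rfl fun j _ => by rw [sub_right_comm]).trans (ha (k - c))

theorem sum_castSucc (ha : SolvesRecurrence u a) (k : ℤ) :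
    ∑ s : Fin n, u s.castSucc * a (k - s) = -(u (Fin.last n) * a (k - n)) := by
  have hk := ha k
  rw [Fin.sum_univ_castSucc] at hk
  simp only [Fin.val_castSucc, Fin.val_last] at hk
  linarith

theorem Ct_mul_toeplitz (hun : u (Fin.last n) ≠ 0) (ha : SolvesRecurrence u a) :
    Ct n u * toeplitz a = toeplitz (fun m => a (m - 1)) := by
  ext ⟨_ | i, hp⟩ q
  · rw [Ct_mul_apply_zero _ hp]
    have hrev (s : Fin n) : ((s.rev : ℕ) : ℤ) - q = n - 1 - q - s := by
      rw [Fin.val_rev]; omega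
    simp only [toeplitz, of_apply, hrev, ha.sum_castSucc, neg_neg, mul_div_cancel_left₀ _ hun]
    congr 1
    ring
  · rw [Ct_mul_apply_succ]
    simp only [toeplitz, of_apply]
    congr 1
    push_cast
    ring

theorem toeplitz_mul_Cr (hun : u (Fin.last n) ≠ 0) (ha : SolvesRecurrence u a) :
    toeplitz a * Cr n u = toeplitz (fun m => a (m - 1)) := by
  ext p ⟨j, hj⟩
  by_cases hlast : j + 1 = n
  · obtain rfl : j = n - 1 := by omega
    rw [mul_Cr_apply_last]
    simp only [toeplitz, of_apply]
    rw [ha.sum_castSucc, neg_neg, mul_div_cancel_left₀ _ hun]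
    congr 1
    omega
  · rw [mul_Cr_apply_of_succ_lt _ _ _ (by omega)]
    simp only [toeplitz, of_apply]
    congr 1
    push_cast
    ring

theorem isUnit_det_Ct (hun : u (Fin.last n) ≠ 0) (ha : SolvesRecurrence u a)
    (hT : IsUnit (toeplitz a : Matrix (Fin n) (Fin n) ℝ).det) : IsUnit (Ct n u).det := by
  have h := (ha.comp_sub (-1)).Ct_mul_toeplitz hun
  simp only [sub_neg_eq_add, sub_add_cancel] at h
  rw [← h, det_mul] at hT
  exact isUnit_of_mul_isUnit_left hT

theorem isUnit_det_Cr (hun : u (Fin.last n) ≠ 0) (ha : SolvesRecurrence u a)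
    (hT : IsUnit (toeplitz a : Matrix (Fin n) (Fin n) ℝ).det) : IsUnit (Cr n u).det := by
  have h := (ha.comp_sub (-1)).toeplitz_mul_Cr hun
  simp only [sub_neg_eq_add, sub_add_cancel] at h
  rw [← h, det_mul] at hT
  exact isUnit_of_mul_isUnit_right hT

theorem Ct_zpow_mul_toeplitz_mul_Cr_zpow (hun : u (Fin.last n) ≠ 0) (ha : SolvesRecurrence u a)
    (hCt : IsUnit (Ct n u).det) (hCr : IsUnit (Cr n u).det) (i j : ℤ) :
    Ct n u ^ i * toeplitz a * Cr n u ^ j = toeplitz (fun m => a (m - i - j)) := by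
  have hleft (c : ℤ) :
      Ct n u * toeplitz (fun m => a (m - c)) = toeplitz (fun m => a (m - (c + 1))) := by
    rw [(ha.comp_sub c).Ct_mul_toeplitz hun]
    simp_rw [sub_sub, add_comm (1 : ℤ)]
  have hright (c : ℤ) :
      toeplitz (fun m => a (m - c)) * Cr n u = toeplitz (fun m => a (m - (c + 1))) := by
    rw [(ha.comp_sub c).toeplitz_mul_Cr hun]
    simp_rw [sub_sub, add_comm (1 : ℤ)]
  calc Ct n u ^ i * toeplitz a * Cr n u ^ j
      = Ct n u ^ i * toeplitz (fun m => a (m - 0)) * Cr n u ^ j := by simp only [sub_zero]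
    _ = toeplitz (fun m => a (m - (0 + i + j))) := by
      rw [Matrix.zpow_mul_eq_of_mul_eq hCt hleft, Matrix.mul_zpow_eq_of_mul_eq hCr hright]
    _ = toeplitz (fun m => a (m - i - j)) := by simp only [zero_add, sub_sub]

end SolvesRecurrence

end

section

variable {n : ℕ} {T : Matrix (Fin n) (Fin n) ℝ} {u : Fin (n + 1) → ℝ}

def symbolExtension (u : Fin (n + 1) → ℝ) (T : Matrix (Fin n) (Fin n) ℝ) (m : ℤ) : ℝ :=
  if h : m.natAbs < n then
    if 0 ≤ m then T ⟨m.natAbs, h⟩ ⟨0, by omega⟩ else T ⟨0, by omega⟩ ⟨m.natAbs, h⟩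
  else if n ≤ m then
    -(∑ j : Fin n, u j.succ * symbolExtension u T (m - (j + 1))) / u 0
  else
    -(∑ j : Fin n, u j.castSucc * symbolExtension u T (m + n - j)) / u (Fin.last n)
termination_by m.natAbs
decreasing_by all_goals (have := j.isLt; omega)

theorem symbolExtension_sub (hT : IsToeplitz T) (p q : Fin n) :
    symbolExtension u T (p - q) = T p q := by
  rw [symbolExtension, dif_pos (by omega)]
  split_ifs with hpq
  · convert (hT.apply_add (p - q) 0 q (by omega) (by omega)).symm using 2 <;>
      (rw [Fin.ext_iff]; dsimp only; omega)
  · convert (hT.apply_add 0 (q - p) p (by omega) (by omega)).symm using 2 <;>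
      (rw [Fin.ext_iff]; dsimp only; omega)

theorem symbolExtension_of_le (hu1 : u 0 ≠ 0) {m : ℤ} (hm : n ≤ m) :
    u 0 * symbolExtension u T m = -∑ j : Fin n, u j.succ * symbolExtension u T (m - (j + 1)) := by
  rw [symbolExtension, dif_neg (by omega), if_pos (by omega), mul_div_cancel₀ _ hu1]

theorem symbolExtension_of_le_neg (hun : u (Fin.last n) ≠ 0) {m : ℤ} (hm0 : m < 0)
    (hm : m ≤ -n) :
    u (Fin.last n) * symbolExtension u T m =
      -∑ j : Fin n, u j.castSucc * symbolExtension u T (m + n - j) := by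
  rw [symbolExtension, dif_neg (by omega), if_neg (by omega), mul_div_cancel₀ _ hun]

theorem dT_mulVec_apply (hT : IsToeplitz T) (i : Fin (n - 1)) :
    (dT T *ᵥ u) i = ∑ j : Fin (n + 1), u j * symbolExtension u T (i + 1 - j) := by
  simp only [mulVec, dotProduct]
  refine Finset.sum_congr rfl fun j _ => ?_
  rw [mul_comm]
  congr 1
  by_cases hj : (j : ℕ) = 0
  · rw [dT, of_apply, if_pos hj, ← symbolExtension_sub (u := u) hT]
    congr 1
    push_cast
    omega
  · rw [dT, of_apply, if_neg hj, ← symbolExtension_sub (u := u) hT]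
    congr 1
    push_cast
    omega

theorem solvesRecurrence_symbolExtension (hT : IsToeplitz T) (hu1 : u 0 ≠ 0)
    (hun : u (Fin.last n) ≠ 0) (hker : dT T *ᵥ u = 0) :
    SolvesRecurrence u (symbolExtension u T) := by
  intro k
  rcases le_or_gt (n : ℤ) k with hk | hk
  · rw [Fin.sum_univ_succ, Fin.val_zero, Nat.cast_zero, sub_zero, symbolExtension_of_le hu1 hk]
    simp only [Fin.val_succ, Nat.cast_add, Nat.cast_one, neg_add_cancel]
  rcases le_or_gt k 0 with hk' | hk'
  · rw [Fin.sum_univ_castSucc, Fin.val_last,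
      symbolExtension_of_le_neg hun (m := k - n) (by omega) (by omega)]
    simp only [Fin.val_castSucc, sub_add_cancel, add_neg_cancel]
  · obtain ⟨i, rfl⟩ : ∃ i : ℕ, k = i + 1 := ⟨k.toNat - 1, by omega⟩
    simpa only [dT_mulVec_apply hT, Pi.zero_apply] using congrFun hker ⟨i, by omega⟩

end

theorem toeplitz_extension_general
    (n : ℕ) (T : Matrix (Fin n) (Fin n) ℝ)
    (hTinv : IsUnit T.det) (hT : IsToeplitz T)
    (u : Fin (n + 1) → ℝ) (hu1 : u 0 ≠ 0) (hun : u (Fin.last n) ≠ 0)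
    (hker : (dT T).mulVec u = 0) :
    ∃ a : ℤ → ℝ,
      (∀ p q : Fin n, T p q = a (((p : ℕ) : ℤ) - ((q : ℕ) : ℤ))) ∧
      (∀ (i j : ℤ) (p q : Fin n),
        (Ct n u ^ i * T * Cr n u ^ j) p q = a (((p : ℕ) : ℤ) - ((q : ℕ) : ℤ) - i - j)) ∧
      (∀ i j : ℤ, IsToeplitz (Ct n u ^ i * T * Cr n u ^ j)) := by
  set a := symbolExtension u T
  have ha : SolvesRecurrence u a := solvesRecurrence_symbolExtension hT hu1 hun hker
  have hTa : toeplitz a = T := by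
    ext p q
    exact symbolExtension_sub hT p q
  have hdet : IsUnit (toeplitz a : Matrix (Fin n) (Fin n) ℝ).det := hTa ▸ hTinv
  have hconj (i j : ℤ) : Ct n u ^ i * T * Cr n u ^ j = toeplitz (fun m => a (m - i - j)) := by
    rw [← hTa]
    exact ha.Ct_zpow_mul_toeplitz_mul_Cr_zpow hun (ha.isUnit_det_Ct hun hdet)
      (ha.isUnit_det_Cr hun hdet) i j
  refine ⟨a, fun p q => (symbolExtension_sub hT p q).symm, fun i j p q => ?_, fun i j => ?_⟩
  · rw [hconj]
    rfl
  · rw [hconj]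
    exact isToeplitz_toeplitz _

/-- Theorem (Toeplitz extension): if `u ∈ ker ∂T` for an invertible Toeplitz `T` with
entries `T_{p,q} = a(p−q)`, then `(C_t(u)^i T C_r(u)^j)_{p,q} = a(p−q−i−j)` for all
integers `i, j`; in particular every `C_t(u)^i T C_r(u)^j` is Toeplitz. -/
theorem toeplitz_extension
    (n : ℕ) (hn : 2 ≤ n) (T : Matrix (Fin n) (Fin n) ℝ)
    (hTinv : IsUnit T.det) (hT : IsToeplitz T)
    (u : Fin (n + 1) → ℝ) (hu1 : u 0 ≠ 0) (hun : u (Fin.last n) ≠ 0)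
    (hker : (dT T).mulVec u = 0) :
    ∃ a : ℤ → ℝ,
      (∀ p q : Fin n, T p q = a (((p : ℕ) : ℤ) - ((q : ℕ) : ℤ))) ∧
      (∀ (i j : ℤ) (p q : Fin n),
        (Ct n u ^ i * T * Cr n u ^ j) p q = a (((p : ℕ) : ℤ) - ((q : ℕ) : ℤ) - i - j)) ∧
      (∀ i j : ℤ, IsToeplitz (Ct n u ^ i * T * Cr n u ^ j)) :=
  toeplitz_extension_general n T hTinv hT u hu1 hun hker
end
end

section
/- Let n ≥ 2, let H be an invertible n×n real Hankel matrix, and let u = (u₁,…,u_{n+1}) ∈ ℝ^{n+1} with u₁ ≠ 0 and u_{n+1} ≠ 0, such that the reversed vector u^J lies in the kernel of ∂H. Then there exists a function a : ℤ → ℝ such that H_{p,q} = a(p+q−n−1) for all 1 ≤ p,q ≤ n, and for all integers i, j and all 1 ≤ p,q ≤ n, (C_t(u)^i · H · C_r(u^J)^j)_{p,q} = a(p + q − n − 1 − i + j). In particular, every matrix C_t(u)^i · H · C_r(u^J)^j (i, j ∈ ℤ) is Hankel, so the extension of H by companion matrices preserves the Hankel structure. -/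
open Matrix Polynomial

noncomputable section

/-!
Read the entries of `H` as a window `a (1 - n), …, a (n - 1)` of a sequence (indices are
0-based here, so `H p q = a (p + q + 1 - n)`). Row `m - 1` of `∂H u^J = 0` says that the window
satisfies the linear recurrence `∑ₖ uₖ a (m - k) = 0` wherever it fits, and since `u₁` and
`u_{n+1}` are nonzero the window extends to a solution `a : ℤ → ℝ` on all of `ℤ`. For the Hankel
matrices `E c = (a (p + q + 1 - n + c))`, the first row of `C_t(u) E c` and the last column of
`E c C_r(u^J)` are again instances of the recurrence, so `C_t(u) E c = E (c - 1)` and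
`E c C_r(u^J) = E (c + 1)`. In particular `C_t(u) H C_r(u^J) = H`, so both companion matrices are
invertible because `H` is, and induction on the exponents gives `C_t(u)^i H C_r(u^J)^j = E (j - i)`.
-/

theorem IsHankel.apply_eq_of_add_eq {n : ℕ} {H : Matrix (Fin n) (Fin n) ℝ} (hH : IsHankel H)
    {p q p' q' : Fin n} (h : (p : ℕ) + q = p' + q') : H p q = H p' q' := by
  wlog hle : (p : ℕ) ≤ p' generalizing p q p' q'
  · exact (this h.symm (by omega)).symm
  obtain ⟨d, hd⟩ := Nat.exists_eq_add_of_le hle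
  induction d generalizing p q with
  | zero => congr 1 <;> ext <;> omega
  | succ d ih =>
    calc H p q = H ⟨p + 1, by omega⟩ ⟨q - 1, by omega⟩ := by
          rw [hH p ⟨q - 1, by omega⟩ (by omega) (by simp only; omega)]
          congr; ext; simp only; omega
      _ = H p' q' := ih (by simp only; omega) (by simp only; omega) (by simp only; omega)

theorem IsHankel.exists_seq {n : ℕ} {H : Matrix (Fin n) (Fin n) ℝ} (hH : IsHankel H) :
    ∃ s : ℤ → ℝ, ∀ p q : Fin n, H p q = s (p + q + 1 - n) := by
  classical
  refine ⟨fun t => if h : ∃ p q : Fin n, (p + q + 1 - n : ℤ) = t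
    then H h.choose h.choose_spec.choose else 0, fun p q => ?_⟩
  have h : ∃ p' q' : Fin n, (p' + q' + 1 - n : ℤ) = p + q + 1 - n := ⟨p, q, rfl⟩
  dsimp only
  rw [dif_pos h]
  exact hH.apply_eq_of_add_eq (by have := h.choose_spec.choose_spec; omega)

section LinearRecurrence

variable {n : ℕ}

def LinRecAt (u : Fin (n + 1) → ℝ) (a : ℤ → ℝ) (m : ℤ) : Prop :=
  ∑ k : Fin (n + 1), u k * a (m - k) = 0

variable {u : Fin (n + 1) → ℝ}

theorem LinRecAt.congr {a b : ℤ → ℝ} {m : ℤ} (h : LinRecAt u a m)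
    (hab : ∀ t, m - n ≤ t → t ≤ m → a t = b t) : LinRecAt u b m := by
  rw [LinRecAt, ← h]
  refine Finset.sum_congr rfl fun k _ => ?_
  rw [hab] <;> omega

theorem linRecAt_revVec_iff {a : ℤ → ℝ} {m : ℤ} :
    LinRecAt (revVec u) a m ↔ LinRecAt u (fun t => a (-t)) (n - m) := by
  rw [LinRecAt, LinRecAt, ← Equiv.sum_comp Fin.revPerm]
  refine Eq.congr_left (Finset.sum_congr rfl fun k _ => ?_)
  simp only [revVec, Fin.revPerm_apply, Fin.rev_rev, Fin.val_rev]
  congr 2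
  omega

variable (u)

def extendRight (s : ℤ → ℝ) (R t : ℤ) : ℝ :=
  if t ≤ R then s t else -(∑ k : Fin n, u k.succ * extendRight s R (t - (k + 1))) / u 0
termination_by (t - R).toNat
decreasing_by omega

-- Running the recurrence of `u^J` forwards on the reflected sequence runs that of `u` backwards.
def extendLeft (s : ℤ → ℝ) (L t : ℤ) : ℝ :=
  extendRight (revVec u) (fun t => s (-t)) (-L) (-t)

variable {u} {s : ℤ → ℝ}

theorem extendRight_of_le {R t : ℤ} (ht : t ≤ R) : extendRight u s R t = s t := by
  rw [extendRight, if_pos ht]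

theorem extendLeft_of_le {L t : ℤ} (ht : L ≤ t) : extendLeft u s L t = s t := by
  rw [extendLeft, extendRight_of_le (by omega), neg_neg]

theorem linRecAt_extendRight (hu : u 0 ≠ 0) {R m : ℤ} (hm : R < m) :
    LinRecAt u (extendRight u s R) m := by
  rw [LinRecAt, Fin.sum_univ_succ, extendRight, if_neg (by simp; omega)]
  simp only [Fin.val_zero, Fin.val_succ, Nat.cast_zero, sub_zero, Nat.cast_add, Nat.cast_one]
  field_simp
  ring

theorem linRecAt_extendLeft (hu : u (Fin.last n) ≠ 0) {L m : ℤ} (hm : m < L + n) :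
    LinRecAt u (extendLeft u s L) m := by
  have h := linRecAt_extendRight (u := revVec u) (s := fun t => s (-t))
    (by simpa [revVec] using hu) (show -L < n - m by omega)
  rw [linRecAt_revVec_iff, sub_sub_cancel] at h
  exact h

theorem exists_linRecAt_extension (hu0 : u 0 ≠ 0) (hun : u (Fin.last n) ≠ 0) {L R : ℤ}
    (hs : ∀ m, L + n ≤ m → m ≤ R → LinRecAt u s m) :
    ∃ a : ℤ → ℝ, (∀ t, L ≤ t → t ≤ R → a t = s t) ∧ ∀ m, LinRecAt u a m := by
  refine ⟨extendLeft u (extendRight u s R) L,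
    fun t hL hR => (extendLeft_of_le hL).trans (extendRight_of_le hR), fun m => ?_⟩
  rcases lt_or_ge m (L + n) with hm | hm
  · exact linRecAt_extendLeft hun hm
  · have hf : LinRecAt u (extendRight u s R) m := by
      rcases le_or_gt m R with hR | hR
      · exact (hs m hm hR).congr fun t _ ht => (extendRight_of_le (ht.trans hR)).symm
      · exact linRecAt_extendRight hu0 hR
    exact hf.congr fun t ht _ => (extendLeft_of_le (by omega)).symm

end LinearRecurrence

section Companion

variable {n : ℕ}

theorem Ct_mul_apply_of_ne_zero {κ : Type*} (u : Fin (n + 1) → ℝ) (M : Matrix (Fin n) κ ℝ)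
    {p : Fin n} (hp : (p : ℕ) ≠ 0) (q : κ) :
    (Ct n u * M) p q = M ⟨p - 1, by omega⟩ q := by
  rw [mul_apply, Finset.sum_eq_single_of_mem _ (Finset.mem_univ ⟨p - 1, by omega⟩)]
  · simp only [Ct, of_apply, hp, if_false]
    rw [if_pos (by omega), one_mul]
  · intro k _ hk
    simp only [Ct, of_apply, hp, if_false]
    rw [if_neg (fun h => hk (Fin.ext (by simp only; omega))), zero_mul]

theorem mul_Cr_apply_of_ne_last {κ : Type*} (v : Fin (n + 1) → ℝ) (M : Matrix κ (Fin n) ℝ)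
    (p : κ) {q : Fin n} (hq : (q : ℕ) ≠ n - 1) :
    (M * Cr n v) p q = M p ⟨q + 1, by omega⟩ := by
  rw [mul_apply, Finset.sum_eq_single_of_mem _ (Finset.mem_univ ⟨q + 1, by omega⟩)]
  · simp only [Cr, of_apply, hq, if_false, if_true, mul_one]
  · intro k _ hk
    simp only [Cr, of_apply, hq, if_false]
    rw [if_neg (fun h => hk (Fin.ext (by simp only; omega))), mul_zero]

def hankelOf (n : ℕ) (a : ℤ → ℝ) (c : ℤ) : Matrix (Fin n) (Fin n) ℝ :=
  of fun p q => a (p + q + 1 - n + c)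

theorem isHankel_hankelOf (a : ℤ → ℝ) (c : ℤ) : IsHankel (hankelOf n a c) := by
  intro p q _ _
  simp only [hankelOf, of_apply]
  congr 1
  push_cast
  ring

variable {u : Fin (n + 1) → ℝ} {a : ℤ → ℝ}

theorem Ct_mul_hankelOf (hun : u (Fin.last n) ≠ 0) (ha : ∀ m, LinRecAt u a m) (c : ℤ) :
    Ct n u * hankelOf n a c = hankelOf n a (c - 1) := by
  ext p q
  by_cases hp : (p : ℕ) = 0
  · have hrec := ha (q + c)
    rw [LinRecAt, Fin.sum_univ_castSucc, ← Equiv.sum_comp Fin.revPerm] at hrec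
    have hrow : ∑ k : Fin n, u ⟨n - 1 - k, by omega⟩ * a (k + q + 1 - n + c) =
        -(u (Fin.last n) * a (q + c - n)) := by
      rw [eq_neg_iff_add_eq_zero, ← hrec]
      congr 1
      refine Finset.sum_congr rfl fun k _ => ?_
      have hk : ((Fin.rev k : ℕ) : ℤ) = n - 1 - k := by rw [Fin.val_rev]; omega
      congr 2
      · ext; simp only [Fin.revPerm_apply, Fin.val_castSucc, Fin.val_rev]; omega
      · simp only [Fin.revPerm_apply, Fin.val_castSucc, hk]; ring
    simp only [mul_apply, Ct, hankelOf, of_apply, hp, if_true, neg_div, neg_mul,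
      Finset.sum_neg_distrib, div_mul_eq_mul_div, ← Finset.sum_div, hrow]
    field_simp
    congr 1
    ring
  · rw [Ct_mul_apply_of_ne_zero u _ hp]
    simp only [hankelOf, of_apply]
    congr 1
    push_cast [Nat.cast_sub (Nat.one_le_iff_ne_zero.mpr hp)]
    ring

theorem hankelOf_mul_Cr_revVec (hu : u 0 ≠ 0) (ha : ∀ m, LinRecAt u a m) (c : ℤ) :
    hankelOf n a c * Cr n (revVec u) = hankelOf n a (c + 1) := by
  ext p q
  by_cases hq : (q : ℕ) = n - 1
  · have hrec := ha (p + c + 1)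
    rw [LinRecAt, Fin.sum_univ_succ, ← Equiv.sum_comp Fin.revPerm] at hrec
    have hcol : ∑ k : Fin n, a (p + k + 1 - n + c) * u (Fin.rev ⟨k, by omega⟩) =
        -(u 0 * a (p + c + 1)) := by
      refine eq_neg_of_add_eq_zero_right (Eq.trans ?_ hrec)
      congr 1
      · simp
      · refine Finset.sum_congr rfl fun k _ => ?_
        have hk : ((Fin.rev k : ℕ) : ℤ) = n - 1 - k := by rw [Fin.val_rev]; omega
        rw [mul_comm]
        congr 2
        · ext; simp only [Fin.revPerm_apply, Fin.val_succ, Fin.val_rev]; omega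
        · simp only [Fin.revPerm_apply, Fin.val_succ]; push_cast; omega
    have hn : ((n - 1 : ℕ) : ℤ) = n - 1 := by omega
    simp only [mul_apply, Cr, hankelOf, of_apply, hq, if_true, revVec, Fin.rev_last, mul_neg,
      Finset.sum_neg_distrib, mul_div_assoc', ← Finset.sum_div, hcol, hn]
    field_simp
    congr 1
    ring
  · rw [mul_Cr_apply_of_ne_last _ _ _ hq]
    simp only [hankelOf, of_apply]
    congr 1
    push_cast
    ring

end Companion

namespace Matrix

variable {ι κ R : Type*} [Fintype ι] [DecidableEq ι] [CommRing R]

theorem zpow_mul_eq_of_mul_eq_s19 {A : Matrix ι ι R} (hA : IsUnit A.det) {X : ℤ → Matrix ι κ R}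
    (h : ∀ c, A * X c = X (c - 1)) (i c : ℤ) : A ^ i * X c = X (c - i) := by
  induction i using Int.induction_on generalizing c with
  | zero => simp
  | succ k ih =>
    rw [zpow_add_one hA, Matrix.mul_assoc, h, ih]
    congr 1
    ring
  | pred k ih =>
    have hinv : A⁻¹ * X c = X (c + 1) := by
      rw [← add_sub_cancel_right c 1, ← h, ← Matrix.mul_assoc, nonsing_inv_mul _ hA,
        Matrix.one_mul, sub_add_cancel]
    rw [zpow_sub_one hA, Matrix.mul_assoc, hinv, ih]
    congr 1
    ring

theorem mul_zpow_eq_of_mul_eq_s19 {B : Matrix ι ι R} (hB : IsUnit B.det) {X : ℤ → Matrix κ ι R}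
    (h : ∀ c, X c * B = X (c + 1)) (j c : ℤ) : X c * B ^ j = X (c + j) := by
  induction j using Int.induction_on generalizing c with
  | zero => simp
  | succ k ih =>
    rw [zpow_add_one hB, ← Matrix.mul_assoc, ih, h]
    congr 1
    ring
  | pred k ih =>
    have hinv (c : ℤ) : X c * B⁻¹ = X (c - 1) := by
      rw [← sub_add_cancel c 1, ← h, Matrix.mul_assoc, mul_nonsing_inv _ hB, Matrix.mul_one,
        add_sub_cancel_right]
    rw [zpow_sub_one hB, ← Matrix.mul_assoc, ih, hinv]
    congr 1
    ring

theorem isUnit_det_of_mul_mul_eq_self {A B M : Matrix ι ι R} (hM : IsUnit M.det)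
    (h : A * M * B = M) : IsUnit A.det ∧ IsUnit B.det := by
  have hAB : A.det * B.det = 1 := by
    apply hM.mul_right_cancel
    rw [one_mul, mul_right_comm, ← det_mul, ← det_mul, h]
  exact ⟨IsUnit.of_mul_eq_one _ hAB, IsUnit.of_mul_eq_one_right _ hAB⟩

end Matrix

theorem linRecAt_of_mulVec_dH_eq_zero {n : ℕ} {H : Matrix (Fin n) (Fin n) ℝ} {s : ℤ → ℝ}
    (hs : ∀ p q : Fin n, H p q = s (p + q + 1 - n)) {u : Fin (n + 1) → ℝ}
    (hker : dH H *ᵥ revVec u = 0) {m : ℤ} (hm1 : 1 ≤ m) (hm2 : m ≤ n - 1) :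
    LinRecAt u s m := by
  have hdH : ∀ (i : Fin (n - 1)) (j : Fin (n + 1)), dH H i j = s (i + j + 1 - n) := by
    intro i j
    rw [dH, of_apply]
    split_ifs with hj
    · rw [hs]
    · rw [hs]
      congr 1
      have := i.isLt
      have := j.isLt
      dsimp only
      omega
  have hrow := congrFun hker ⟨(m - 1).toNat, by omega⟩
  simp only [mulVec, dotProduct, hdH, revVec, Pi.zero_apply] at hrow
  rw [LinRecAt, ← hrow, ← Equiv.sum_comp Fin.revPerm]
  refine Finset.sum_congr rfl fun k _ => ?_
  rw [mul_comm]
  simp only [Fin.revPerm_apply, Fin.val_rev]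
  congr 2
  have := k.isLt
  omega

theorem hankel_extension_general
    (n : ℕ) (H : Matrix (Fin n) (Fin n) ℝ)
    (hHinv : IsUnit H.det) (hH : IsHankel H)
    (u : Fin (n + 1) → ℝ) (hu1 : u 0 ≠ 0) (hun : u (Fin.last n) ≠ 0)
    (hker : (dH H).mulVec (revVec u) = 0) :
    ∃ a : ℤ → ℝ,
      (∀ p q : Fin n, H p q = a (((p : ℕ) : ℤ) + ((q : ℕ) : ℤ) + 1 - (n : ℤ))) ∧
      (∀ (i j : ℤ) (p q : Fin n),
        (Ct n u ^ i * H * Cr n (revVec u) ^ j) p q =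
          a (((p : ℕ) : ℤ) + ((q : ℕ) : ℤ) + 1 - (n : ℤ) - i + j)) ∧
      (∀ i j : ℤ, IsHankel (Ct n u ^ i * H * Cr n (revVec u) ^ j)) := by
  obtain ⟨s, hs⟩ := hH.exists_seq
  obtain ⟨a, has, ha⟩ := exists_linRecAt_extension (L := 1 - n) (R := n - 1) hu1 hun
    fun m hm1 hm2 => linRecAt_of_mulVec_dH_eq_zero hs hker (by omega) hm2
  have hHa : H = hankelOf n a 0 := by
    ext p q
    rw [hs, hankelOf, of_apply, add_zero]
    exact (has _ (by omega) (by omega)).symm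
  have hCt := Ct_mul_hankelOf hun ha
  have hCr := hankelOf_mul_Cr_revVec hu1 ha
  obtain ⟨hCt_det, hCr_det⟩ := isUnit_det_of_mul_mul_eq_self hHinv
    (show Ct n u * H * Cr n (revVec u) = H by rw [hHa, hCt, hCr, sub_add_cancel])
  have key (i j : ℤ) : Ct n u ^ i * H * Cr n (revVec u) ^ j = hankelOf n a (j - i) := by
    rw [hHa, zpow_mul_eq_of_mul_eq_s19 hCt_det hCt, mul_zpow_eq_of_mul_eq_s19 hCr_det hCr]
    congr 1
    ring
  refine ⟨a, fun p q => ?_, fun i j p q => ?_, fun i j => key i j ▸ isHankel_hankelOf a _⟩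
  · rw [hHa, hankelOf, of_apply, add_zero]
  · rw [key, hankelOf, of_apply]
    congr 1
    ring

/-- Corollary (Hankel extension): if `u^J ∈ ker ∂H` for an invertible Hankel `H` with
entries `H_{p,q} = a(p+q−n−1)`, then `(C_t(u)^i H C_r(u^J)^j)_{p,q} = a(p+q−n−1−i+j)`
for all integers `i, j`; in particular every `C_t(u)^i H C_r(u^J)^j` is Hankel. -/
theorem hankel_extension
    (n : ℕ) (hn : 2 ≤ n) (H : Matrix (Fin n) (Fin n) ℝ)
    (hHinv : IsUnit H.det) (hH : IsHankel H)
    (u : Fin (n + 1) → ℝ) (hu1 : u 0 ≠ 0) (hun : u (Fin.last n) ≠ 0)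
    (hker : (dH H).mulVec (revVec u) = 0) :
    ∃ a : ℤ → ℝ,
      (∀ p q : Fin n, H p q = a (((p : ℕ) : ℤ) + ((q : ℕ) : ℤ) + 1 - (n : ℤ))) ∧
      (∀ (i j : ℤ) (p q : Fin n),
        (Ct n u ^ i * H * Cr n (revVec u) ^ j) p q =
          a (((p : ℕ) : ℤ) + ((q : ℕ) : ℤ) + 1 - (n : ℤ) - i + j)) ∧
      (∀ i j : ℤ, IsHankel (Ct n u ^ i * H * Cr n (revVec u) ^ j)) :=
  hankel_extension_general n H hHinv hH u hu1 hun hker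
end
end
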